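/- For every x with 0.301 < x < π/2, one has (tan x)/x < (8 + b(x))/(π² − 4x²), where b(x) = (8/π)(π/2 − x) + (16/π² − 8/3)(π/2 − x)² + (32/π³ − 8/(3π))(π/2 − x)³. -/

import Mathlib

/-!
Put t = π/2 - x, so that sin x = cos t and cos x = sin t. Clearing denominators, the claim
becomes cos t · (π² - 4x²) < (8 + b(x)) · x · sin t. For t ≥ 0 the Taylor polynomials of sin and
cos alternate around them (integrate 0 ≤ 1 - cos repeatedly), so cos t may be replaced by its
degree-8 Taylor polynomial and sin t by its degree-7 one. The difference of the two sides is then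
t⁵ R(t) / π³ for an explicit sextic R, which is positive for 0 ≤ t ≤ 3/2: rounding its
π-dependent coefficients down leaves a numerical quintic that is positive there.
-/

open Real Finset
open scoped Nat

lemma nonneg_of_hasDerivAt_nonneg {f f' : ℝ → ℝ} (hf : ∀ y, HasDerivAt f (f' y) y)
    (hf' : ∀ y, 0 ≤ y → 0 ≤ f' y) (h0 : f 0 = 0) {t : ℝ} (ht : 0 ≤ t) : 0 ≤ f t := by
  have hmono : MonotoneOn f (Set.Ici 0) :=
    monotoneOn_of_hasDerivWithinAt_nonneg (convex_Ici 0)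
      (continuous_iff_continuousAt.2 fun y => (hf y).continuousAt).continuousOn
      (fun y _ => (hf y).hasDerivWithinAt) (fun y hy => hf' y (interior_subset hy))
  simpa [h0] using hmono Set.self_mem_Ici ht ht

noncomputable section

def sinTaylor (n : ℕ) (t : ℝ) : ℝ :=
  ∑ k ∈ range n, (-1) ^ k * t ^ (2 * k + 1) / (2 * k + 1)!

def cosTaylor (n : ℕ) (t : ℝ) : ℝ :=
  ∑ k ∈ range n, (-1) ^ k * t ^ (2 * k) / (2 * k)!

end

lemma hasDerivAt_pow_div_factorial (m : ℕ) (t : ℝ) :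
    HasDerivAt (fun t : ℝ => t ^ (m + 1) / (m + 1)!) (t ^ m / m !) t := by
  refine ((hasDerivAt_pow (m + 1) t).div_const _).congr_deriv ?_
  rw [Nat.factorial_succ]
  push_cast
  field_simp

lemma hasDerivAt_sinTaylor (n : ℕ) (t : ℝ) : HasDerivAt (sinTaylor n) (cosTaylor n t) t := by
  unfold sinTaylor cosTaylor
  simp_rw [mul_div_assoc]
  exact HasDerivAt.fun_sum fun k _ => (hasDerivAt_pow_div_factorial (2 * k) t).const_mul _

lemma cosTaylor_succ_eq_one_sub (n : ℕ) (t : ℝ) :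
    cosTaylor (n + 1) t =
      1 - ∑ k ∈ range n, (-1) ^ k * (t ^ (2 * k + 1 + 1) / (2 * k + 1 + 1)!) := by
  simp only [cosTaylor, sum_range_succ', sub_eq_add_neg, ← sum_neg_distrib]
  rw [add_comm]
  congr 1
  · simp
  · refine sum_congr rfl fun k _ => ?_
    rw [show 2 * (k + 1) = 2 * k + 1 + 1 by ring, pow_succ (-1 : ℝ)]
    ring

lemma hasDerivAt_cosTaylor_succ (n : ℕ) (t : ℝ) :
    HasDerivAt (cosTaylor (n + 1)) (-sinTaylor n t) t := by
  have h := (HasDerivAt.fun_sum fun k (_ : k ∈ range n) =>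
    (hasDerivAt_pow_div_factorial (2 * k + 1) t).const_mul ((-1 : ℝ) ^ k)).const_sub 1
  rw [show cosTaylor (n + 1) = _ from funext (cosTaylor_succ_eq_one_sub n)]
  simpa [sinTaylor, mul_div_assoc] using h

lemma sin_sub_sinTaylor_nonneg {n : ℕ}
    (hcos : ∀ y, 0 ≤ y → 0 ≤ (-1) ^ n * (cos y - cosTaylor n y)) {t : ℝ} (ht : 0 ≤ t) :
    0 ≤ (-1) ^ n * (sin t - sinTaylor n t) :=
  nonneg_of_hasDerivAt_nonneg
    (fun y => ((hasDerivAt_sin y).sub (hasDerivAt_sinTaylor n y)).const_mul _) hcos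
    (by simp [sinTaylor]) ht

lemma cos_sub_cosTaylor_succ_nonneg {n : ℕ}
    (hsin : ∀ y, 0 ≤ y → 0 ≤ (-1) ^ n * (sin y - sinTaylor n y)) {t : ℝ} (ht : 0 ≤ t) :
    0 ≤ (-1) ^ (n + 1) * (cos t - cosTaylor (n + 1) t) :=
  nonneg_of_hasDerivAt_nonneg
    (fun y => ((hasDerivAt_cos y).sub (hasDerivAt_cosTaylor_succ n y)).const_mul _)
    (fun y hy => by rw [pow_succ]; linear_combination hsin y hy)
    (by simp [cosTaylor_succ_eq_one_sub]) ht

lemma cos_sin_sub_taylor_alternating (n : ℕ) :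
    (∀ t, 0 ≤ t → 0 ≤ (-1) ^ (n + 1) * (cos t - cosTaylor (n + 1) t)) ∧
      ∀ t, 0 ≤ t → 0 ≤ (-1) ^ (n + 1) * (sin t - sinTaylor (n + 1) t) := by
  induction n with
  | zero =>
    have hcos (t : ℝ) (_ : 0 ≤ t) : 0 ≤ (-1) ^ (0 + 1) * (cos t - cosTaylor (0 + 1) t) := by
      simp [cosTaylor, cos_le_one]
    exact ⟨hcos, fun t => sin_sub_sinTaylor_nonneg hcos⟩
  | succ n ih =>
    have hcos (t : ℝ) := @cos_sub_cosTaylor_succ_nonneg (n + 1) ih.2 t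
    exact ⟨hcos, fun t => sin_sub_sinTaylor_nonneg hcos⟩

lemma taylor7_le_sin {t : ℝ} (ht : 0 ≤ t) :
    t - t ^ 3 / 6 + t ^ 5 / 120 - t ^ 7 / 5040 ≤ sin t := by
  have h := (cos_sin_sub_taylor_alternating 3).2 t ht
  norm_num [sinTaylor, sum_range_succ, Nat.factorial] at h
  linarith

lemma cos_le_taylor8 {t : ℝ} (ht : 0 ≤ t) :
    cos t ≤ 1 - t ^ 2 / 2 + t ^ 4 / 24 - t ^ 6 / 720 + t ^ 8 / 40320 := by
  have h := (cos_sin_sub_taylor_alternating 4).1 t ht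
  norm_num [cosTaylor, sum_range_succ, Nat.factorial] at h
  linarith

lemma pi_pow_bounds {k : ℕ} (hk : k ≠ 0) :
    (3.141592 : ℝ) ^ k < π ^ k ∧ π ^ k < (3.141593 : ℝ) ^ k :=
  ⟨pow_lt_pow_left₀ pi_gt_d6 (by norm_num) hk, pow_lt_pow_left₀ pi_lt_d6 pi_pos.le hk⟩

noncomputable def tanCorrection (x : ℝ) : ℝ :=
  (8 / π) * (π / 2 - x) + (16 / π ^ 2 - 8 / 3) * (π / 2 - x) ^ 2 +
    (32 / π ^ 3 - 8 / (3 * π)) * (π / 2 - x) ^ 3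

/-- `t ^ 5 * tanRemainder t / π ^ 3` is the gap left in `sin_mul_lt_mul_cos` once sin and cos
are replaced by the Taylor polynomials of `taylor7_le_sin` and `cos_le_taylor8`. -/
noncomputable def tanRemainder (t : ℝ) : ℝ :=
  (4 / 45 * π ^ 4 + 8 / 3 * π ^ 2 - 32) - 4 / 45 * π ^ 3 * t
    - (2 / 315 * π ^ 4 + 4 / 9 * π ^ 2 - 16 / 3) * t ^ 2 + 2 / 315 * π ^ 3 * t ^ 3
    + (1 / 6048 * π ^ 4 + 1 / 45 * π ^ 2 - 4 / 15) * t ^ 4 - 1 / 6048 * π ^ 3 * t ^ 5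
    + (2 / 315 - 1 / 1890 * π ^ 2) * t ^ 6

lemma tanRemainder_pos {t : ℝ} (ht0 : 0 ≤ t) (ht : t ≤ 3 / 2) : 0 < tanRemainder t := by
  obtain ⟨h2, h2'⟩ := pi_pow_bounds two_ne_zero
  obtain ⟨h3, h3'⟩ := pi_pow_bounds three_ne_zero
  obtain ⟨h4, h4'⟩ := pi_pow_bounds four_ne_zero
  norm_num at h2 h2' h3 h3' h4 h4'
  have c1 : -2.757 * t ≤ -(4 / 45 * π ^ 3 * t) := by nlinarith
  have c2 : 0.328 * t ^ 2 ≤ -(2 / 315 * π ^ 4 + 4 / 9 * π ^ 2 - 16 / 3) * t ^ 2 :=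
    mul_le_mul_of_nonneg_right (by linarith) (pow_nonneg ht0 2)
  have c3 : 0.196 * t ^ 3 ≤ 2 / 315 * π ^ 3 * t ^ 3 :=
    mul_le_mul_of_nonneg_right (by linarith) (pow_nonneg ht0 3)
  have c4 : -0.032 * t ^ 4 ≤ (1 / 6048 * π ^ 4 + 1 / 45 * π ^ 2 - 4 / 15) * t ^ 4 :=
    mul_le_mul_of_nonneg_right (by linarith) (pow_nonneg ht0 4)
  have c5 : -0.006 * t ^ 5 ≤ -(1 / 6048 * π ^ 3 * t ^ 5) := by nlinarith [pow_nonneg ht0 5]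
  have c6 : 0 ≤ (2 / 315 - 1 / 1890 * π ^ 2) * t ^ 6 :=
    mul_nonneg (by linarith) (pow_nonneg ht0 6)
  have hq : 0 < 2.977 - 2.757 * t + 0.328 * t ^ 2 + 0.196 * t ^ 3 - 0.032 * t ^ 4
      - 0.006 * t ^ 5 := by
    nlinarith [mul_nonneg ht0 (sub_nonneg.2 ht), mul_nonneg (pow_nonneg ht0 2) (sub_nonneg.2 ht),
      mul_nonneg (pow_nonneg ht0 3) (sub_nonneg.2 ht),
      mul_nonneg (pow_nonneg ht0 4) (sub_nonneg.2 ht),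
      mul_nonneg ht0 (sq_nonneg (t - 1)), mul_nonneg (sq_nonneg t) (sq_nonneg (t - 1))]
  unfold tanRemainder
  linarith

lemma eight_add_tanCorrection_pos {x : ℝ} (hx : π / 2 - 3 / 2 ≤ x) (hx' : x < π / 2) :
    0 < 8 + tanCorrection x := by
  have ht0 : 0 ≤ π / 2 - x := by linarith
  have hc1 : 0 ≤ 8 / π * (π / 2 - x) := by positivity
  have hc2 : -(8 / 3) * (π / 2 - x) ^ 2 ≤ (16 / π ^ 2 - 8 / 3) * (π / 2 - x) ^ 2 :=
    mul_le_mul_of_nonneg_right (by linarith [show 0 ≤ 16 / π ^ 2 by positivity]) (sq_nonneg _)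
  have hc3 : 0 ≤ (32 / π ^ 3 - 8 / (3 * π)) * (π / 2 - x) ^ 3 := by
    refine mul_nonneg (sub_nonneg.2 ?_) (pow_nonneg ht0 3)
    rw [div_le_div_iff₀ (by positivity) (by positivity)]
    nlinarith [pi_pos, pi_lt_d2]
  have ht2 : (π / 2 - x) ^ 2 ≤ 9 / 4 := by nlinarith
  unfold tanCorrection
  linarith

lemma sin_mul_lt_mul_cos {x : ℝ} (hx : π / 2 - 3 / 2 ≤ x) (hx' : x < π / 2) :
    sin x * (π ^ 2 - 4 * x ^ 2) < (8 + tanCorrection x) * x * cos x := by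
  obtain ⟨t, rfl⟩ : ∃ t, x = π / 2 - t := ⟨π / 2 - x, by ring⟩
  have ht0 : 0 < t := by linarith
  have ht : t ≤ 3 / 2 := by linarith
  rw [sin_pi_div_two_sub, cos_pi_div_two_sub]
  set C := 1 - t ^ 2 / 2 + t ^ 4 / 24 - t ^ 6 / 720 + t ^ 8 / 40320
  set S := t - t ^ 3 / 6 + t ^ 5 / 120 - t ^ 7 / 5040
  have hD : 0 < π ^ 2 - 4 * (π / 2 - t) ^ 2 := by nlinarith [pi_gt_three]
  have hP : 0 < (8 + tanCorrection (π / 2 - t)) * (π / 2 - t) :=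
    mul_pos (eight_add_tanCorrection_pos hx hx') (by linarith [pi_gt_three])
  have hgap : (8 + tanCorrection (π / 2 - t)) * (π / 2 - t) * S
      - C * (π ^ 2 - 4 * (π / 2 - t) ^ 2) = t ^ 5 * tanRemainder t / π ^ 3 := by
    simp only [tanCorrection, tanRemainder, C, S]
    field_simp
    ring
  have hR : 0 < t ^ 5 * tanRemainder t / π ^ 3 := by
    have := tanRemainder_pos ht0.le ht
    positivity
  calc cos t * (π ^ 2 - 4 * (π / 2 - t) ^ 2) ≤ C * (π ^ 2 - 4 * (π / 2 - t) ^ 2) :=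
        mul_le_mul_of_nonneg_right (cos_le_taylor8 ht0.le) hD.le
    _ < (8 + tanCorrection (π / 2 - t)) * (π / 2 - t) * S := by linarith
    _ ≤ (8 + tanCorrection (π / 2 - t)) * (π / 2 - t) * sin t :=
        mul_le_mul_of_nonneg_left (taylor7_le_sin ht0.le) hP.le

theorem stmt4 (x : ℝ) (h0 : 0.301 < x) (h1 : x < π / 2) :
    Real.tan x / x <
      (8 + ((8 / π) * (π / 2 - x) + (16 / π ^ 2 - 8 / 3) * (π / 2 - x) ^ 2 +
        (32 / π ^ 3 - 8 / (3 * π)) * (π / 2 - x) ^ 3)) / (π ^ 2 - 4 * x ^ 2) := by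
  have hx : π / 2 - 3 / 2 ≤ x := by linarith [pi_lt_d2]
  have hx0 : 0 < x := by linarith
  have hcos : 0 < cos x := cos_pos_of_mem_Ioo ⟨by linarith, h1⟩
  have hD : 0 < π ^ 2 - 4 * x ^ 2 := by nlinarith
  rw [tan_eq_sin_div_cos, div_div, div_lt_div_iff₀ (by positivity) hD]
  have h := sin_mul_lt_mul_cos hx h1
  unfold tanCorrection at h
  linarith
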